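/- arXiv:1405.0913 — 3 statements merged into one kernel-verified Lean document; each statement's English description precedes it below -/
import Mathlib

section
/- If f_X is positive on (a,b), has at least three continuous derivatives on (a,b), and its fourth derivative exists (Lebesgue-)almost everywhere on (a,b), then the transformed density f_Y is positive on ℝ, has at least three continuous derivatives on ℝ, and its fourth derivative exists almost everywhere on ℝ. -/
/-!
Write `f_Y = φ · (f_X ∘ g)` with `g y = (a + b eʸ) / (1 + eʸ)`, a smooth map of `ℝ` into `(a, b)`,
and `φ = g'` smooth and positive. By induction on `n`, via the product and chain rules, having the
lower derivatives near a point and a differentiable `n`-th derivative at it is stable under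
products and under composition with smooth maps; so `f_Y'''` is differentiable at every `y` at
which `f_X'''` is differentiable at `g y`. The remaining `y` lie in the image of a null set under
the logit map, which is differentiable on `(a, b)` and therefore maps null sets to null sets.
-/

open MeasureTheory Filter Topology Real
open scoped ContDiff

section

variable {𝕜 : Type*} [NontriviallyNormedField 𝕜]

/-- The derivatives of `f` of order below `n` exist near `x`, and `iteratedDeriv n f` is
differentiable at `x`. -/
def DifferentiableIteratedDerivAt : ℕ → (𝕜 → 𝕜) → 𝕜 → Prop
  | 0, f, x => DifferentiableAt 𝕜 f x
  | n + 1, f, x => (∀ᶠ z in 𝓝 x, DifferentiableAt 𝕜 f z) ∧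
      DifferentiableIteratedDerivAt n (deriv f) x

namespace DifferentiableIteratedDerivAt

variable {n : ℕ} {f g u v : 𝕜 → 𝕜} {x : 𝕜}

theorem differentiableAt_iteratedDeriv (h : DifferentiableIteratedDerivAt n f x) :
    DifferentiableAt 𝕜 (iteratedDeriv n f) x := by
  induction n generalizing f with
  | zero => rw [iteratedDeriv_zero]; exact h
  | succ n ih => simpa [iteratedDeriv_succ'] using ih h.2

theorem differentiableAt (h : DifferentiableIteratedDerivAt n f x) : DifferentiableAt 𝕜 f x := by
  cases n with
  | zero => exact h
  | succ n => exact h.1.self_of_nhds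

theorem of_succ (h : DifferentiableIteratedDerivAt (n + 1) f x) :
    DifferentiableIteratedDerivAt n f x := by
  induction n generalizing f with
  | zero => exact h.differentiableAt
  | succ n ih => exact ⟨h.1, ih h.2⟩

theorem congr_of_eventuallyEq (h : DifferentiableIteratedDerivAt n f x) (hfg : f =ᶠ[𝓝 x] g) :
    DifferentiableIteratedDerivAt n g x := by
  induction n generalizing f g with
  | zero => exact DifferentiableAt.congr_of_eventuallyEq h hfg.symm
  | succ n ih =>
    refine ⟨?_, ih h.2 hfg.deriv⟩
    filter_upwards [h.1, hfg.eventuallyEq_nhds] with z hz hfgz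
    exact hz.congr_of_eventuallyEq hfgz.symm

theorem of_contDiff (hf : ContDiff 𝕜 ∞ f) : DifferentiableIteratedDerivAt n f x := by
  induction n generalizing f with
  | zero => exact hf.differentiable (by simp) x
  | succ n ih =>
    exact ⟨Eventually.of_forall (hf.differentiable (by simp)),
      ih (contDiff_infty_iff_deriv.1 hf).2⟩

theorem add (hu : DifferentiableIteratedDerivAt n u x)
    (hv : DifferentiableIteratedDerivAt n v x) :
    DifferentiableIteratedDerivAt n (u + v) x := by
  induction n generalizing u v with
  | zero => exact DifferentiableAt.add hu hv
  | succ n ih =>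
    refine ⟨?_, (ih hu.2 hv.2).congr_of_eventuallyEq ?_⟩
    · filter_upwards [hu.1, hv.1] with z hu hv using hu.add hv
    · filter_upwards [hu.1, hv.1] with z hu hv using (deriv_add hu hv).symm

theorem mul (hu : DifferentiableIteratedDerivAt n u x)
    (hv : DifferentiableIteratedDerivAt n v x) :
    DifferentiableIteratedDerivAt n (u * v) x := by
  induction n generalizing u v with
  | zero => exact DifferentiableAt.mul hu hv
  | succ n ih =>
    refine ⟨?_, ((ih hu.2 hv.of_succ).add (ih hu.of_succ hv.2)).congr_of_eventuallyEq ?_⟩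
    · filter_upwards [hu.1, hv.1] with z hu hv using hu.mul hv
    · filter_upwards [hu.1, hv.1] with z hu hv using (deriv_mul hu hv).symm

theorem comp (hf : DifferentiableIteratedDerivAt n f (g x)) (hg : ContDiff 𝕜 ∞ g) :
    DifferentiableIteratedDerivAt n (f ∘ g) x := by
  have hg' : Differentiable 𝕜 g := hg.differentiable (by simp)
  induction n generalizing f with
  | zero => exact DifferentiableAt.comp x hf (hg' x)
  | succ n ih =>
    have hfg : ∀ᶠ z in 𝓝 x, DifferentiableAt 𝕜 f (g z) :=
      hg'.continuous.continuousAt.eventually hf.1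
    have hdg : DifferentiableIteratedDerivAt n (deriv g) x :=
      of_contDiff (contDiff_infty_iff_deriv.1 hg).2
    refine ⟨?_, ((ih hf.2).mul hdg).congr_of_eventuallyEq ?_⟩
    · filter_upwards [hfg] with z hz using hz.comp z (hg' z)
    · filter_upwards [hfg] with z hz using (deriv_comp z hz (hg' z)).symm

theorem of_contDiffOn {s : Set 𝕜} (hf : ContDiffOn 𝕜 n f s) (hs : IsOpen s) (hx : x ∈ s)
    (hfx : DifferentiableAt 𝕜 (iteratedDeriv n f) x) : DifferentiableIteratedDerivAt n f x := by
  induction n generalizing f with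
  | zero => rw [iteratedDeriv_zero] at hfx; exact hfx
  | succ n ih =>
    rw [Nat.cast_add, Nat.cast_one, contDiffOn_succ_iff_deriv_of_isOpen hs] at hf
    exact ⟨hf.1.eventually_differentiableAt (hs.mem_nhds hx),
      ih hf.2.2 (by rwa [← iteratedDeriv_succ'])⟩

end DifferentiableIteratedDerivAt

end

theorem ae_comp_of_leftInverse {E : Type*} [NormedAddCommGroup E] [NormedSpace ℝ E]
    [FiniteDimensional ℝ E] [MeasurableSpace E] [BorelSpace E] (μ : Measure E)
    [μ.IsAddHaarMeasure] {s : Set E} {g L : E → E} {p : E → Prop}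
    (hL : DifferentiableOn ℝ L s) (hgs : ∀ y, g y ∈ s) (hLg : Function.LeftInverse L g)
    (hp : ∀ᵐ x ∂μ, x ∈ s → p x) : ∀ᵐ y ∂μ, p (g y) := by
  rw [ae_iff] at hp ⊢
  have hbad : μ (s ∩ {x | ¬p x}) = 0 :=
    measure_mono_null (t := {x | ¬(x ∈ s → p x)}) (fun x hx hxp => hx.2 (hxp hx.1)) hp
  have hsub : {y | ¬p (g y)} ⊆ L '' (s ∩ {x | ¬p x}) := fun y hy => ⟨g y, ⟨hgs y, hy⟩, hLg y⟩
  exact measure_mono_null hsub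
    (addHaar_image_eq_zero_of_differentiableOn_of_addHaar_eq_zero μ
      (hL.mono Set.inter_subset_left) hbad)

section

noncomputable def scaledLogistic (a b y : ℝ) : ℝ := (a + b * exp y) / (1 + exp y)

noncomputable def scaledLogit (a b x : ℝ) : ℝ := log ((x - a) / (b - x))

variable {a b : ℝ}

theorem scaledLogistic_mem_Ioo (hab : a < b) (y : ℝ) : scaledLogistic a b y ∈ Set.Ioo a b := by
  have he := exp_pos y
  constructor
  · rw [scaledLogistic, lt_div_iff₀ (by positivity)]; nlinarith
  · rw [scaledLogistic, div_lt_iff₀ (by positivity)]; nlinarith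

theorem contDiff_scaledLogistic {n : WithTop ℕ∞} : ContDiff ℝ n (scaledLogistic a b) :=
  (contDiff_const.add (contDiff_const.mul contDiff_exp)).div
    (contDiff_const.add contDiff_exp) fun y => by positivity

theorem scaledLogit_scaledLogistic (hab : a < b) :
    Function.LeftInverse (scaledLogit a b) (scaledLogistic a b) := by
  intro y
  have hba : b - a ≠ 0 := sub_ne_zero.2 hab.ne'
  have hlow : scaledLogistic a b y - a = (b - a) * exp y / (1 + exp y) := by
    unfold scaledLogistic; field_simp; ring
  have hupp : b - scaledLogistic a b y = (b - a) / (1 + exp y) := by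
    unfold scaledLogistic; field_simp; ring
  have hratio : (b - a) * exp y / (1 + exp y) / ((b - a) / (1 + exp y)) = exp y := by
    field_simp
  rw [scaledLogit, hlow, hupp, hratio, log_exp]

theorem differentiableOn_scaledLogit : DifferentiableOn ℝ (scaledLogit a b) (Set.Ioo a b) := by
  intro x hx
  have hxa : 0 < x - a := sub_pos.2 hx.1
  have hbx : 0 < b - x := sub_pos.2 hx.2
  refine (DifferentiableAt.log ?_ (by positivity)).differentiableWithinAt
  exact (differentiableAt_id.sub_const a).div
    ((differentiableAt_const b).sub differentiableAt_id) hbx.ne'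

end

/-- If `f_X` is positive on `(a,b)`, has at least three continuous derivatives
on `(a,b)`, and its fourth derivative exists (Lebesgue-)almost everywhere on `(a,b)`, then the
transformed density `f_Y(y) = (b-a)·(e^y/(1+e^y)²)·f_X((a+b·e^y)/(1+e^y))` is positive on `ℝ`,
has at least three continuous derivatives on `ℝ`, and its fourth derivative exists almost
everywhere on `ℝ`. -/
theorem transformed_density_regularity (a b : ℝ) (hab : a < b)
    (fX fY : ℝ → ℝ)
    (hfY : ∀ y : ℝ, fY y =
      (b - a) * (Real.exp y / (1 + Real.exp y) ^ 2) *
        fX ((a + b * Real.exp y) / (1 + Real.exp y)))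
    (hpos : ∀ x ∈ Set.Ioo a b, 0 < fX x)
    (hsmooth : ContDiffOn ℝ 3 fX (Set.Ioo a b))
    (h4 : ∀ᵐ x ∂volume, x ∈ Set.Ioo a b → DifferentiableAt ℝ (iteratedDeriv 3 fX) x) :
    (∀ y : ℝ, 0 < fY y) ∧ ContDiff ℝ 3 fY ∧
      ∀ᵐ y ∂volume, DifferentiableAt ℝ (iteratedDeriv 3 fY) y := by
  set φ : ℝ → ℝ := fun y => (b - a) * (exp y / (1 + exp y) ^ 2)
  have hfY_eq : fY = φ * (fX ∘ scaledLogistic a b) := funext hfY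
  have hφ (n : WithTop ℕ∞) : ContDiff ℝ n φ := contDiff_const.mul <| contDiff_exp.div
    ((contDiff_const.add contDiff_exp).pow 2) fun y => by positivity
  refine ⟨fun y => ?_, ?_, ?_⟩
  · rw [hfY_eq]
    exact mul_pos (mul_pos (sub_pos.2 hab) (by positivity)) (hpos _ (scaledLogistic_mem_Ioo hab y))
  · rw [hfY_eq]
    exact (hφ 3).mul (hsmooth.comp_contDiff contDiff_scaledLogistic (scaledLogistic_mem_Ioo hab))
  · filter_upwards [ae_comp_of_leftInverse volume differentiableOn_scaledLogit
      (scaledLogistic_mem_Ioo hab) (scaledLogit_scaledLogistic hab) h4] with y hy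
    rw [hfY_eq]
    have hfX : DifferentiableIteratedDerivAt 3 fX (scaledLogistic a b y) :=
      .of_contDiffOn hsmooth isOpen_Ioo (scaledLogistic_mem_Ioo hab y) hy
    exact ((DifferentiableIteratedDerivAt.of_contDiff (hφ ∞)).mul
      (hfX.comp contDiff_scaledLogistic)).differentiableAt_iteratedDeriv
end

section
/- Suppose f_X is positive with at least three continuous derivatives on (a,b), the fourth derivative of f_X exists almost everywhere on (a,b), and f_X satisfies the moment conditions ∫_a^b (f_X'(x)/f_X(x))⁴ f_X(x) dx < ∞, ∫_a^b (f_X''(x)/f_X(x))⁴ f_X(x) dx < ∞, ∫_a^b (f_X'''(x)/f_X(x))⁴ f_X(x) dx < ∞, and ∫_a^b |f_X''''(x)/f_X(x)| f_X(x) dx < ∞. Then the transformed density f_Y satisfies the corresponding moment conditions on ℝ: ∫_ℝ (f_Y'(y)/f_Y(y))⁴ f_Y(y) dy < ∞, ∫_ℝ (f_Y''(y)/f_Y(y))⁴ f_Y(y) dy < ∞, ∫_ℝ (f_Y'''(y)/f_Y(y))⁴ f_Y(y) dy < ∞, and ∫_ℝ |f_Y''''(y)/f_Y(y)| f_Y(y)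 dy < ∞. -/
/-!
Write `σ` for the sigmoid and `g = a + (b - a) σ`, the inverse of the logit map, so that
`f_Y = g' · (f_X ∘ g)` with `g' = (b - a) σ (1 - σ)`. Since `σ' = σ (1 - σ)`, differentiating
`k` times gives `f_Y⁽ᵏ⁾ = σ (1 - σ) ∑_{j ≤ k} P_{kj}(σ) · (f_X⁽ʲ⁾ ∘ g)` for polynomials `P_{kj}`,
which are bounded on `[0, 1]`; hence `|f_Y⁽ᵏ⁾| ≤ K g' ∑_j |f_X⁽ʲ⁾ ∘ g|`. By the power mean
inequality, `(f_Y⁽ᵏ⁾ / f_Y)⁴ f_Y ≤ K' g' ∑_j ((f_X⁽ʲ⁾ / f_X)⁴ f_X) ∘ g`, and the substitution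
`x = g y` turns the integral of the right-hand side into a sum of moments of `f_X`. The `j = 0`
term is `∫ f_X`, which is finite because the first moment condition puts the derivative of
`f_X ^ (1/4)` in `L¹`, so that `f_X` is bounded. The fourth derivative of `f_Y` exists only almost
everywhere, which suffices because `g⁻¹` maps null sets to null sets.
-/

open MeasureTheory Real Set Finset Polynomial

open scoped Interval

lemma le_one_add_pow {t : ℝ} (ht : 0 ≤ t) {n : ℕ} (hn : n ≠ 0) : t ≤ 1 + t ^ n := by
  rcases le_total t 1 with h | h
  · linarith [pow_nonneg ht n]
  · linarith [le_self_pow₀ h hn]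

section IteratedDeriv

variable {𝕜 F : Type*} [NontriviallyNormedField 𝕜] [NormedAddCommGroup F] [NormedSpace 𝕜 F]
  {f : 𝕜 → F} {s : Set 𝕜} {n : WithTop ℕ∞} {m : ℕ}

lemma ContDiffOn.differentiableAt_iteratedDeriv {x : 𝕜} (h : ContDiffOn 𝕜 n f s) (hs : IsOpen s)
    (hx : x ∈ s) (hm : m < n) : DifferentiableAt 𝕜 (iteratedDeriv m f) x :=
  ((h.differentiableOn_iteratedDerivWithin hm hs.uniqueDiffOn).congr
    fun _ hy => (iteratedDerivWithin_of_isOpen hs hy).symm).differentiableAt (hs.mem_nhds hx)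

lemma ContDiffOn.continuousOn_iteratedDeriv (h : ContDiffOn 𝕜 n f s) (hs : IsOpen s)
    (hm : m ≤ n) : ContinuousOn (iteratedDeriv m f) s :=
  (h.continuousOn_iteratedDerivWithin hm hs.uniqueDiffOn).congr
    fun _ hx => (iteratedDerivWithin_of_isOpen hs hx).symm

end IteratedDeriv

lemma abs_sub_le_setIntegral_abs_of_hasDerivAt {v v' : ℝ → ℝ} {a b c x : ℝ}
    (hv : ∀ t ∈ Ioo a b, HasDerivAt v (v' t) t) (hint : IntegrableOn v' (Ioo a b))
    (hc : c ∈ Ioo a b) (hx : x ∈ Ioo a b) : |v x - v c| ≤ ∫ t in Ioo a b, |v' t| := by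
  have hsub : uIcc c x ⊆ Ioo a b := ordConnected_Ioo.uIcc_subset hc hx
  rw [← intervalIntegral.integral_eq_sub_of_hasDerivAt (fun t ht => hv t (hsub ht))
    (intervalIntegrable_iff.2 (hint.mono_set (uIoc_subset_uIcc.trans hsub)))]
  calc |∫ t in c..x, v' t| ≤ ∫ t in Ι c x, |v' t| := by
        simpa only [Real.norm_eq_abs] using intervalIntegral.norm_integral_le_integral_norm_uIoc
          (f := v') (μ := volume) (a := c) (b := x)
    _ ≤ ∫ t in Ioo a b, |v' t| := setIntegral_mono_set hint.abs
        (ae_of_all _ fun _ => abs_nonneg _) (uIoc_subset_uIcc.trans hsub).eventuallyLE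

/-- `v = f ^ (1/n)` has `|v'| ^ n = n⁻ⁿ |f'/f| ^ n f`, so `v' ∈ L¹`, and `v` is bounded on
`(a, b)` by the fundamental theorem of calculus. -/
theorem integrableOn_of_integrableOn_abs_logDeriv_pow_mul {f : ℝ → ℝ} {a b : ℝ} {n : ℕ}
    (hab : a < b) (hn : n ≠ 0) (hpos : ∀ x ∈ Ioo a b, 0 < f x)
    (hf : DifferentiableOn ℝ f (Ioo a b))
    (hm : IntegrableOn (fun x => |deriv f x / f x| ^ n * f x) (Ioo a b)) :
    IntegrableOn f (Ioo a b) := by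
  set v : ℝ → ℝ := fun x => f x ^ (n⁻¹ : ℝ)
  set v' : ℝ → ℝ := fun x => (n : ℝ)⁻¹ * v x * (deriv f x / f x)
  have hv : ∀ x ∈ Ioo a b, HasDerivAt v (v' x) x := fun x hx =>
    ((hf.differentiableAt (isOpen_Ioo.mem_nhds hx)).hasDerivAt.rpow_const
      (Or.inl (hpos x hx).ne')).congr_deriv (by
        simp only [v', v]; rw [rpow_sub_one (hpos x hx).ne']; ring)
  have hvn : ∀ x ∈ Ioo a b, v x ^ n = f x := fun x hx => rpow_inv_natCast_pow (hpos x hx).le hn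
  have hv'_le : ∀ x ∈ Ioo a b, |v' x| ≤ 1 + |deriv f x / f x| ^ n * f x := by
    intro x hx
    have hv0 : 0 ≤ v x := rpow_nonneg (hpos x hx).le _
    refine (le_one_add_pow (abs_nonneg _) hn).trans ?_
    gcongr 1 + ?_
    rw [abs_mul, abs_mul, abs_of_nonneg hv0, mul_pow, mul_pow, hvn x hx, abs_inv, Nat.abs_cast]
    rw [mul_assoc, mul_comm (f x)]
    exact mul_le_of_le_one_left (mul_nonneg (by positivity) (hpos x hx).le)
      (pow_le_one₀ (inv_nonneg.2 n.cast_nonneg)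
        (inv_le_one_of_one_le₀ (by exact_mod_cast Nat.one_le_iff_ne_zero.2 hn)))
  have hfc : ContinuousOn f (Ioo a b) := hf.continuousOn
  have hv'_int : IntegrableOn v' (Ioo a b) := by
    have hvc : ContinuousOn v (Ioo a b) := hfc.rpow_const fun x hx => Or.inl (hpos x hx).ne'
    refine Integrable.mono' (g := fun x => 1 + |deriv f x / f x| ^ n * f x)
      ((integrableOn_const measure_Ioo_lt_top.ne).add hm)
      (((continuousOn_const.mul hvc).aestronglyMeasurable measurableSet_Ioo).aemeasurable.mul
        ((measurable_deriv f).aemeasurable.div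
          (hfc.aestronglyMeasurable measurableSet_Ioo).aemeasurable)).aestronglyMeasurable
      ((ae_restrict_iff' measurableSet_Ioo).2 (ae_of_all _ hv'_le))
  obtain ⟨c, hc⟩ := Set.nonempty_Ioo.2 hab
  refine Integrable.mono' (integrableOn_const (C := (v c + ∫ t in Ioo a b, |v' t|) ^ n)
    measure_Ioo_lt_top.ne) (hfc.aestronglyMeasurable measurableSet_Ioo)
    ((ae_restrict_iff' measurableSet_Ioo).2 (ae_of_all _ fun x hx => ?_))
  rw [Real.norm_eq_abs, abs_of_pos (hpos x hx), ← hvn x hx]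
  exact pow_le_pow_left₀ (rpow_nonneg (hpos x hx).le _) (by
    linarith [le_abs_self (v x - v c), abs_sub_le_setIntegral_abs_of_hasDerivAt hv hv'_int hc hx]) n

lemma MeasureTheory.IntegrableOn.abs_div_mul_of_abs_div_pow_mul {f g : ℝ → ℝ} {s : Set ℝ}
    {n : ℕ} (hs : MeasurableSet s) (hn : n ≠ 0) (hpos : ∀ x ∈ s, 0 < f x) (hfc : ContinuousOn f s)
    (hgc : ContinuousOn g s) (hf : IntegrableOn f s)
    (hq : IntegrableOn (fun x => |g x / f x| ^ n * f x) s) :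
    IntegrableOn (fun x => |g x / f x| * f x) s := by
  refine Integrable.mono' (hf.add hq)
    (((hgc.div hfc fun x hx => (hpos x hx).ne').abs.mul hfc).aestronglyMeasurable hs)
    ((ae_restrict_iff' hs).2 (ae_of_all _ fun x hx => ?_))
  rw [Real.norm_eq_abs, abs_of_nonneg (mul_nonneg (abs_nonneg _) (hpos x hx).le)]
  have := mul_le_mul_of_nonneg_right (le_one_add_pow (abs_nonneg (g x / f x)) hn) (hpos x hx).le
  simpa [add_mul] using this

lemma div_pow_four_mul_le {w f F K : ℝ} {s : Finset ℕ} {v : ℕ → ℝ} (hw : 0 < w) (hf : 0 < f)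
    (hF : |F| ≤ K * w * ∑ j ∈ s, |v j|) :
    (F / (w * f)) ^ 4 * (w * f) ≤ K ^ 4 * #s ^ 3 * (w * ∑ j ∈ s, (v j / f) ^ 4 * f) := by
  have hsum : ∑ j ∈ s, (v j / f) ^ 4 * f = (∑ j ∈ s, |v j| ^ 4) / f ^ 3 := by
    rw [sum_div]
    refine sum_congr rfl fun j _ => ?_
    rw [Even.pow_abs ⟨2, rfl⟩]
    field_simp
  calc (F / (w * f)) ^ 4 * (w * f) = |F| ^ 4 / (w * f) ^ 3 := by
        rw [Even.pow_abs ⟨2, rfl⟩]; field_simp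
    _ ≤ (K * w * ∑ j ∈ s, |v j|) ^ 4 / (w * f) ^ 3 := by gcongr
    _ ≤ K ^ 4 * w ^ 4 * (#s ^ 3 * ∑ j ∈ s, |v j| ^ 4) / (w * f) ^ 3 := by
        rw [mul_pow, mul_pow]
        gcongr
        exact pow_sum_le_card_mul_sum_pow (fun _ _ => abs_nonneg _) 3
    _ = K ^ 4 * #s ^ 3 * (w * ∑ j ∈ s, (v j / f) ^ 4 * f) := by
        rw [hsum]; field_simp

lemma abs_div_mul_le {w f F K : ℝ} {s : Finset ℕ} {v : ℕ → ℝ} (hw : 0 < w) (hf : 0 < f)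
    (hF : |F| ≤ K * w * ∑ j ∈ s, |v j|) :
    |F / (w * f)| * (w * f) ≤ K * (w * ∑ j ∈ s, |v j / f| * f) := by
  have hsum : ∑ j ∈ s, |v j / f| * f = ∑ j ∈ s, |v j| :=
    sum_congr rfl fun j _ => by rw [abs_div, abs_of_pos hf, div_mul_cancel₀ _ hf.ne']
  rw [hsum, abs_div, abs_of_pos (mul_pos hw hf), div_mul_cancel₀ _ (mul_pos hw hf).ne',
    ← mul_assoc]
  exact hF

lemma ae_comp_of_deriv_ne_zero {f : ℝ → ℝ} (hf : Differentiable ℝ f)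
    (hinj : Function.Injective f) (hf' : ∀ x, deriv f x ≠ 0) {p : ℝ → Prop} (hp : ∀ᵐ x, p x) :
    ∀ᵐ y, p (f y) := by
  obtain ⟨t, hpt, ht, ht0⟩ := exists_measurable_superset_of_null (ae_iff.1 hp)
  have hs : MeasurableSet (f ⁻¹' t) := hf.continuous.measurable ht
  have himage := lintegral_image_eq_lintegral_abs_deriv_mul hs
    (fun x _ => (hf x).hasDerivAt.hasDerivWithinAt) hinj.injOn fun _ => 1
  rw [setLIntegral_one, measure_mono_null (image_preimage_subset f t) ht0, eq_comm,
    setLIntegral_eq_zero_iff hs (by fun_prop)] at himage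
  filter_upwards [himage] with y hy
  by_contra h
  simpa [hf' y] using hy (hpt h)

namespace LogitTransform

lemma sigmoid_mul_one_sub_pos (y : ℝ) : 0 < sigmoid y * (1 - sigmoid y) :=
  mul_pos (sigmoid_pos y) (sub_pos.2 (sigmoid_lt_one y))

def IsSigmoidExpansion (u : ℕ → ℝ → ℝ) (n : ℕ) (F : ℝ → ℝ) : Prop :=
  ∃ P : ℕ → ℝ[X], ∀ y, F y =
    sigmoid y * (1 - sigmoid y) * ∑ j ∈ range n, (P j).eval (sigmoid y) * u j y

lemma hasDerivAt_sigmoid_mul_eval (p : ℝ[X]) (y : ℝ) :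
    HasDerivAt (fun y => sigmoid y * (1 - sigmoid y) * p.eval (sigmoid y))
      (sigmoid y * (1 - sigmoid y) * (derivative (X * (1 - X) * p)).eval (sigmoid y)) y := by
  have h : (fun y => sigmoid y * (1 - sigmoid y) * p.eval (sigmoid y)) =
      (fun s => (X * (1 - X) * p).eval s) ∘ sigmoid := by
    funext y; simp [mul_assoc]
  rw [h]
  exact (((X * (1 - X) * p).hasDerivAt _).comp y (hasDerivAt_sigmoid y)).congr_deriv
    (mul_comm _ _)

lemma isSigmoidExpansion_sum_succ (u : ℕ → ℝ → ℝ) (n : ℕ) (P : ℕ → ℝ[X]) :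
    IsSigmoidExpansion u (n + 1) fun y =>
      sigmoid y * (1 - sigmoid y) * ∑ j ∈ range n, (P j).eval (sigmoid y) * u (j + 1) y :=
  ⟨fun j => if j = 0 then 0 else P (j - 1), fun y => by simp [sum_range_succ']⟩

namespace IsSigmoidExpansion

variable {u : ℕ → ℝ → ℝ} {n m : ℕ} {F G : ℝ → ℝ}

lemma add (hF : IsSigmoidExpansion u n F) (hG : IsSigmoidExpansion u n G) :
    IsSigmoidExpansion u n (F + G) := by
  obtain ⟨P, hP⟩ := hF
  obtain ⟨Q, hQ⟩ := hG
  exact ⟨P + Q, fun y => by simp [hP, hQ, add_mul, sum_add_distrib, mul_add]⟩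

lemma mono (hF : IsSigmoidExpansion u n F) (hnm : n ≤ m) : IsSigmoidExpansion u m F := by
  obtain ⟨P, hP⟩ := hF
  obtain ⟨k, rfl⟩ := Nat.exists_eq_add_of_le hnm
  refine ⟨fun j => if j < n then P j else 0, fun y => ?_⟩
  have h : ∑ j ∈ range n, (if j < n then P j else 0).eval (sigmoid y) * u j y =
      ∑ j ∈ range n, (P j).eval (sigmoid y) * u j y :=
    sum_congr rfl fun j hj => by simp [mem_range.1 hj]
  simp [hP, sum_range_add, h]

lemma exists_hasDerivAt (hF : IsSigmoidExpansion u n F) (c : ℝ) :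
    ∃ G, IsSigmoidExpansion u (n + 1) G ∧ ∀ y,
      (∀ j < n, HasDerivAt (u j) (c * (sigmoid y * (1 - sigmoid y)) * u (j + 1) y) y) →
      HasDerivAt F (G y) y := by
  obtain ⟨P, hP⟩ := hF
  let A y := sigmoid y * (1 - sigmoid y) *
    ∑ j ∈ range n, (derivative (X * (1 - X) * P j)).eval (sigmoid y) * u j y
  let B y := sigmoid y * (1 - sigmoid y) *
    ∑ j ∈ range n, (C c * X * (1 - X) * P j).eval (sigmoid y) * u (j + 1) y
  have hA : IsSigmoidExpansion u (n + 1) A := (show IsSigmoidExpansion u n A from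
    ⟨_, fun _ => rfl⟩).mono n.le_succ
  refine ⟨A + B, hA.add (isSigmoidExpansion_sum_succ u n _), fun y hu => ?_⟩
  have hF : F = fun y => ∑ j ∈ range n,
      sigmoid y * (1 - sigmoid y) * (P j).eval (sigmoid y) * u j y := by
    ext y; rw [hP, mul_sum]; simp only [mul_assoc]
  rw [hF]
  refine (HasDerivAt.fun_sum fun j hj =>
    (hasDerivAt_sigmoid_mul_eval (P j) y).mul (hu j (mem_range.1 hj))).congr_deriv ?_
  simp only [A, B, Pi.add_apply, mul_sum, ← sum_add_distrib]
  refine sum_congr rfl fun j _ => ?_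
  simp only [derivative_mul, derivative_X, derivative_sub, derivative_one, eval_add, eval_mul,
    eval_sub, eval_one, eval_X, eval_C]
  ring

lemma deriv (hF : IsSigmoidExpansion u n F) {c : ℝ}
    (hu : ∀ y, ∀ j < n, HasDerivAt (u j) (c * (sigmoid y * (1 - sigmoid y)) * u (j + 1) y) y) :
    IsSigmoidExpansion u (n + 1) (deriv F) := by
  obtain ⟨G, ⟨P, hP⟩, hFG⟩ := hF.exists_hasDerivAt c
  exact ⟨P, fun y => (hFG y (hu y)).deriv.trans (hP y)⟩

lemma exists_abs_le (hF : IsSigmoidExpansion u n F) :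
    ∃ K, ∀ y, |F y| ≤ K * (sigmoid y * (1 - sigmoid y)) * ∑ j ∈ range n, |u j y| := by
  obtain ⟨P, hP⟩ := hF
  obtain ⟨K, hK⟩ := (isCompact_Icc (a := (0 : ℝ)) (b := 1)).exists_bound_of_continuousOn
    (f := fun s => ∑ j ∈ range n, |(P j).eval s|) (by fun_prop)
  refine ⟨K, fun y => ?_⟩
  have hσ : sigmoid y ∈ Set.Icc 0 1 := ⟨sigmoid_nonneg y, sigmoid_le_one y⟩
  have hPK : ∀ j ∈ range n, |(P j).eval (sigmoid y)| ≤ K := fun j hj =>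
    (single_le_sum (f := fun j => |(P j).eval (sigmoid y)|) (fun _ _ => abs_nonneg _) hj).trans
      ((le_abs_self _).trans (hK _ hσ))
  have hL := (sigmoid_mul_one_sub_pos y).le
  calc |F y| = sigmoid y * (1 - sigmoid y) *
        |∑ j ∈ range n, (P j).eval (sigmoid y) * u j y| := by rw [hP, abs_mul, abs_of_nonneg hL]
    _ ≤ sigmoid y * (1 - sigmoid y) * ∑ j ∈ range n, K * |u j y| := by
        gcongr
        refine (abs_sum_le_sum_abs _ _).trans (sum_le_sum fun j hj => ?_)
        rw [abs_mul]
        exact mul_le_mul_of_nonneg_right (hPK j hj) (abs_nonneg _)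
    _ = K * (sigmoid y * (1 - sigmoid y)) * ∑ j ∈ range n, |u j y| := by rw [← mul_sum]; ring

end IsSigmoidExpansion

/-- The inverse of the logit transformation `x ↦ log ((x - a) / (b - x))`. -/
noncomputable def logistic (a b y : ℝ) : ℝ := a + (b - a) * sigmoid y

noncomputable def logitDensity (a b : ℝ) (f : ℝ → ℝ) (y : ℝ) : ℝ :=
  (b - a) * (sigmoid y * (1 - sigmoid y)) * f (logistic a b y)

section Logistic

variable {a b : ℝ}

lemma hasDerivAt_logistic (a b y : ℝ) :
    HasDerivAt (logistic a b) ((b - a) * (sigmoid y * (1 - sigmoid y))) y :=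
  ((hasDerivAt_sigmoid y).const_mul (b - a)).const_add a

lemma logistic_mem_Ioo (hab : a < b) (y : ℝ) : logistic a b y ∈ Ioo a b := by
  have := sigmoid_pos y
  have := sigmoid_lt_one y
  constructor <;> simp only [logistic] <;> nlinarith

lemma strictMono_logistic (hab : a < b) : StrictMono (logistic a b) := fun _ _ h =>
  add_lt_add_right (mul_lt_mul_of_pos_left (sigmoid_lt h) (sub_pos.2 hab)) a

lemma range_logistic (hab : a < b) : range (logistic a b) = Ioo a b := by
  have h : logistic a b = (fun s => (b - a) * s + a) ∘ sigmoid := by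
    funext y; simp [logistic, add_comm]
  rw [h, range_comp, range_sigmoid, image_affine_Ioo (sub_pos.2 hab)]
  congr 1 <;> ring

lemma logitDensity_apply (a b : ℝ) (f : ℝ → ℝ) (y : ℝ) : logitDensity a b f y =
    (b - a) * (exp y / (1 + exp y) ^ 2) * f ((a + b * exp y) / (1 + exp y)) := by
  have hσ : sigmoid y = exp y / (1 + exp y) := by
    rw [sigmoid_def, exp_neg]; field_simp; ring
  rw [logitDensity, logistic, hσ]
  congr 2
  · field_simp; ring
  · field_simp; ring

lemma integrable_comp_logistic (hab : a < b) {p : ℝ → ℝ} (hp : IntegrableOn p (Ioo a b)) :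
    Integrable fun y => (b - a) * (sigmoid y * (1 - sigmoid y)) * p (logistic a b y) := by
  rw [← range_logistic hab, ← image_univ, integrableOn_image_iff_integrableOn_abs_deriv_smul
    MeasurableSet.univ (fun y _ => (hasDerivAt_logistic a b y).hasDerivWithinAt)
    (strictMono_logistic hab).injective.injOn, integrableOn_univ] at hp
  refine hp.congr (ae_of_all _ fun y => ?_)
  simp [abs_of_pos (mul_pos (sub_pos.2 hab) (sigmoid_mul_one_sub_pos y))]

lemma ae_comp_logistic (hab : a < b) {p : ℝ → Prop} (hp : ∀ᵐ x, x ∈ Ioo a b → p x) :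
    ∀ᵐ y, p (logistic a b y) := by
  have hderiv (y : ℝ) : deriv (logistic a b) y ≠ 0 := by
    rw [(hasDerivAt_logistic a b y).deriv]
    exact (mul_pos (sub_pos.2 hab) (sigmoid_mul_one_sub_pos y)).ne'
  filter_upwards [ae_comp_of_deriv_ne_zero (fun y => (hasDerivAt_logistic a b y).differentiableAt)
    (strictMono_logistic hab).injective hderiv hp] with y hy using hy (logistic_mem_Ioo hab y)

end Logistic

section Derivatives

variable {a b : ℝ} {f : ℝ → ℝ} {m : ℕ}

lemma hasDerivAt_iteratedDeriv_comp_logistic {j : ℕ} {y : ℝ}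
    (h : DifferentiableAt ℝ (iteratedDeriv j f) (logistic a b y)) :
    HasDerivAt (fun y => iteratedDeriv j f (logistic a b y))
      ((b - a) * (sigmoid y * (1 - sigmoid y)) * iteratedDeriv (j + 1) f (logistic a b y)) y := by
  rw [iteratedDeriv_succ]
  exact (h.hasDerivAt.comp y (hasDerivAt_logistic a b y)).congr_deriv (mul_comm _ _)

lemma isSigmoidExpansion_iteratedDeriv_logitDensity (hab : a < b)
    (hf : ContDiffOn ℝ m f (Ioo a b)) {k : ℕ} (hk : k ≤ m) :
    IsSigmoidExpansion (fun j y => iteratedDeriv j f (logistic a b y)) (k + 1)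
      (iteratedDeriv k (logitDensity a b f)) := by
  induction k with
  | zero => exact ⟨fun _ => C (b - a), fun y => by simp [logitDensity]; ring⟩
  | succ k ih =>
    rw [iteratedDeriv_succ]
    exact (ih (by omega)).deriv fun y j hj => hasDerivAt_iteratedDeriv_comp_logistic
      (hf.differentiableAt_iteratedDeriv isOpen_Ioo (logistic_mem_Ioo hab y)
        (by exact_mod_cast (by omega : j < m)))

lemma exists_isSigmoidExpansion_ae_eq_iteratedDeriv_logitDensity (hab : a < b)
    (hf : ContDiffOn ℝ m f (Ioo a b))
    (hd : ∀ᵐ x, x ∈ Ioo a b → DifferentiableAt ℝ (iteratedDeriv m f) x) :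
    ∃ G, IsSigmoidExpansion (fun j y => iteratedDeriv j f (logistic a b y)) (m + 2) G ∧
      iteratedDeriv (m + 1) (logitDensity a b f) =ᵐ[volume] G := by
  obtain ⟨G, hG, hderiv⟩ :=
    (isSigmoidExpansion_iteratedDeriv_logitDensity hab hf le_rfl).exists_hasDerivAt (b - a)
  refine ⟨G, hG, ?_⟩
  filter_upwards [ae_comp_logistic hab hd] with y hy
  rw [iteratedDeriv_succ]
  refine (hderiv y fun j hj => hasDerivAt_iteratedDeriv_comp_logistic ?_).deriv
  rcases Nat.lt_succ_iff_lt_or_eq.1 hj with hj | rfl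
  · exact hf.differentiableAt_iteratedDeriv isOpen_Ioo (logistic_mem_Ioo hab y)
      (by exact_mod_cast hj)
  · exact hy

end Derivatives

section Moments

variable {a b : ℝ} {f F : ℝ → ℝ} {n : ℕ}

lemma logitDensity_pos (hab : a < b) (hpos : ∀ x ∈ Ioo a b, 0 < f x) (y : ℝ) :
    0 < logitDensity a b f y :=
  mul_pos (mul_pos (sub_pos.2 hab) (sigmoid_mul_one_sub_pos y)) (hpos _ (logistic_mem_Ioo hab y))

lemma continuous_logitDensity (hab : a < b) (hf : ContinuousOn f (Ioo a b)) :
    Continuous (logitDensity a b f) :=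
  (continuous_const.mul (continuous_sigmoid.mul (continuous_const.sub continuous_sigmoid))).mul
    (hf.comp_continuous (continuous_const.add (continuous_const.mul continuous_sigmoid))
      (logistic_mem_Ioo hab))

lemma IsSigmoidExpansion.exists_abs_le_logistic (hab : a < b)
    (hF : IsSigmoidExpansion (fun j y => iteratedDeriv j f (logistic a b y)) n F) :
    ∃ K, ∀ y, |F y| ≤ K * ((b - a) * (sigmoid y * (1 - sigmoid y))) *
      ∑ j ∈ range n, |iteratedDeriv j f (logistic a b y)| := by
  obtain ⟨K, hK⟩ := hF.exists_abs_le
  refine ⟨K / (b - a), fun y => (hK y).trans_eq ?_⟩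
  field_simp [(sub_pos.2 hab).ne']

lemma integrable_div_logitDensity_pow_four_mul (hab : a < b) (hpos : ∀ x ∈ Ioo a b, 0 < f x)
    (hfc : ContinuousOn f (Ioo a b))
    (hq : ∀ j < n, IntegrableOn (fun x => (iteratedDeriv j f x / f x) ^ 4 * f x) (Ioo a b))
    (hF : IsSigmoidExpansion (fun j y => iteratedDeriv j f (logistic a b y)) n F)
    (hFm : AEStronglyMeasurable F) :
    Integrable fun y => (F y / logitDensity a b f y) ^ 4 * logitDensity a b f y := by
  obtain ⟨K, hK⟩ := hF.exists_abs_le_logistic hab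
  have hρ := (continuous_logitDensity hab hfc).aemeasurable (μ := volume)
  refine ((integrable_finsetSum (range n) fun j hj =>
    integrable_comp_logistic hab (hq j (mem_range.1 hj))).const_mul (K ^ 4 * n ^ 3)).mono'
    (((hFm.aemeasurable.div hρ).pow_const 4).mul hρ).aestronglyMeasurable
    (ae_of_all _ fun y => ?_)
  rw [Real.norm_eq_abs, abs_of_nonneg (mul_nonneg (by positivity) (logitDensity_pos hab hpos y).le)]
  refine (div_pow_four_mul_le (mul_pos (sub_pos.2 hab) (sigmoid_mul_one_sub_pos y))
    (hpos _ (logistic_mem_Ioo hab y)) (hK y)).trans_eq ?_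
  simp [mul_sum]

lemma integrable_abs_div_logitDensity_mul (hab : a < b) (hpos : ∀ x ∈ Ioo a b, 0 < f x)
    (hfc : ContinuousOn f (Ioo a b))
    (hq : ∀ j < n, IntegrableOn (fun x => |iteratedDeriv j f x / f x| * f x) (Ioo a b))
    (hF : IsSigmoidExpansion (fun j y => iteratedDeriv j f (logistic a b y)) n F)
    (hFm : AEStronglyMeasurable F) :
    Integrable fun y => |F y / logitDensity a b f y| * logitDensity a b f y := by
  obtain ⟨K, hK⟩ := hF.exists_abs_le_logistic hab
  have hρ := (continuous_logitDensity hab hfc).aemeasurable (μ := volume)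
  refine ((integrable_finsetSum (range n) fun j hj =>
    integrable_comp_logistic hab (hq j (mem_range.1 hj))).const_mul K).mono'
    ((hFm.aemeasurable.div hρ).abs.mul hρ).aestronglyMeasurable (ae_of_all _ fun y => ?_)
  rw [Real.norm_eq_abs, abs_of_nonneg (mul_nonneg (abs_nonneg _) (logitDensity_pos hab hpos y).le)]
  refine (abs_div_mul_le (mul_pos (sub_pos.2 hab) (sigmoid_mul_one_sub_pos y))
    (hpos _ (logistic_mem_Ioo hab y)) (hK y)).trans_eq ?_
  simp [mul_sum]

lemma integrable_iteratedDeriv_div_logitDensity_pow_four_mul (hab : a < b)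
    (hpos : ∀ x ∈ Ioo a b, 0 < f x) {m : ℕ} (hf : ContDiffOn ℝ m f (Ioo a b))
    (hq : ∀ j ≤ m, IntegrableOn (fun x => (iteratedDeriv j f x / f x) ^ 4 * f x) (Ioo a b))
    {k : ℕ} (hk : k < m) :
    Integrable fun y => (iteratedDeriv (k + 1) (logitDensity a b f) y / logitDensity a b f y) ^ 4 *
      logitDensity a b f y := by
  refine integrable_div_logitDensity_pow_four_mul hab hpos hf.continuousOn
    (fun j hj => hq j (Nat.le_of_lt_succ hj))
    ((isSigmoidExpansion_iteratedDeriv_logitDensity hab hf hk).mono (by omega)) ?_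
  rw [iteratedDeriv_succ]
  exact (measurable_deriv _).aestronglyMeasurable

lemma integrable_abs_iteratedDeriv_div_logitDensity_mul (hab : a < b)
    (hpos : ∀ x ∈ Ioo a b, 0 < f x) {m : ℕ} (hf : ContDiffOn ℝ m f (Ioo a b))
    (hd : ∀ᵐ x, x ∈ Ioo a b → DifferentiableAt ℝ (iteratedDeriv m f) x)
    (hq : ∀ j ≤ m + 1, IntegrableOn (fun x => |iteratedDeriv j f x / f x| * f x) (Ioo a b)) :
    Integrable fun y => |iteratedDeriv (m + 1) (logitDensity a b f) y / logitDensity a b f y| *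
      logitDensity a b f y := by
  obtain ⟨G, hG, hFG⟩ := exists_isSigmoidExpansion_ae_eq_iteratedDeriv_logitDensity hab hf hd
  have hFm : AEStronglyMeasurable (iteratedDeriv (m + 1) (logitDensity a b f)) := by
    rw [iteratedDeriv_succ]
    exact (measurable_deriv _).aestronglyMeasurable
  refine (integrable_abs_div_logitDensity_mul hab hpos hf.continuousOn
    (fun j hj => hq j (Nat.le_of_lt_succ hj)) hG (hFm.congr hFG)).congr ?_
  filter_upwards [hFG] with y hy
  rw [hy]

end Moments

end LogitTransform

open LogitTransform

/-- If `f_X` is positive with three continuous derivatives on `(a,b)`, its fourth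
derivative exists a.e. on `(a,b)`, and `f_X` satisfies the four moment conditions
`∫_a^b (f_X⁽ᵏ⁾/f_X)⁴ f_X < ∞` for `k = 1,2,3` and `∫_a^b |f_X''''/f_X| f_X < ∞`, then the
transformed density `f_Y(y) = (b-a)·(e^y/(1+e^y)²)·f_X((a+b·e^y)/(1+e^y))` satisfies the
corresponding moment conditions on `ℝ`. -/
theorem transformed_density_moment_conditions (a b : ℝ) (hab : a < b)
    (fX fY : ℝ → ℝ)
    (hfY : ∀ y : ℝ, fY y =
      (b - a) * (Real.exp y / (1 + Real.exp y) ^ 2) *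
        fX ((a + b * Real.exp y) / (1 + Real.exp y)))
    (hpos : ∀ x ∈ Set.Ioo a b, 0 < fX x)
    (hsmooth : ContDiffOn ℝ 3 fX (Set.Ioo a b))
    (h4 : ∀ᵐ x ∂volume, x ∈ Set.Ioo a b → DifferentiableAt ℝ (iteratedDeriv 3 fX) x)
    (hm1 : IntegrableOn (fun x => (deriv fX x / fX x) ^ 4 * fX x) (Set.Ioo a b))
    (hm2 : IntegrableOn (fun x => (iteratedDeriv 2 fX x / fX x) ^ 4 * fX x) (Set.Ioo a b))
    (hm3 : IntegrableOn (fun x => (iteratedDeriv 3 fX x / fX x) ^ 4 * fX x) (Set.Ioo a b))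
    (hm4 : IntegrableOn (fun x => |iteratedDeriv 4 fX x / fX x| * fX x) (Set.Ioo a b)) :
    Integrable (fun y => (deriv fY y / fY y) ^ 4 * fY y) volume ∧
    Integrable (fun y => (iteratedDeriv 2 fY y / fY y) ^ 4 * fY y) volume ∧
    Integrable (fun y => (iteratedDeriv 3 fY y / fY y) ^ 4 * fY y) volume ∧
    Integrable (fun y => |iteratedDeriv 4 fY y / fY y| * fY y) volume := by
  obtain rfl : fY = logitDensity a b fX := funext fun y => by rw [hfY, logitDensity_apply]
  have hfX : IntegrableOn fX (Ioo a b) :=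
    integrableOn_of_integrableOn_abs_logDeriv_pow_mul hab four_ne_zero hpos
      (hsmooth.differentiableOn (by norm_num)) (by simpa only [Even.pow_abs ⟨2, rfl⟩] using hm1)
  have hq (j : ℕ) (hj : j ≤ 3) :
      IntegrableOn (fun x => (iteratedDeriv j fX x / fX x) ^ 4 * fX x) (Ioo a b) := by
    interval_cases j
    · exact hfX.congr_fun (fun x hx => by field_simp [(hpos x hx).ne']; simp) measurableSet_Ioo
    · simpa using hm1
    · exact hm2
    · exact hm3
  have h3 : ContDiffOn ℝ (3 : ℕ) fX (Ioo a b) := by exact_mod_cast hsmooth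
  have hmoment (k : ℕ) (hk : k < 3) :=
    integrable_iteratedDeriv_div_logitDensity_pow_four_mul hab hpos h3 hq hk
  refine ⟨by simpa using hmoment 0 (by norm_num), hmoment 1 (by norm_num), hmoment 2 (by norm_num),
    integrable_abs_iteratedDeriv_div_logitDensity_mul hab hpos h3 h4 fun j hj => ?_⟩
  rcases hj.lt_or_eq with hj | rfl
  · exact hfX.abs_div_mul_of_abs_div_pow_mul measurableSet_Ioo four_ne_zero hpos
      hsmooth.continuousOn (hsmooth.continuousOn_iteratedDeriv isOpen_Ioo
        (by exact_mod_cast Nat.le_of_lt_succ hj))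
      (by simpa only [Even.pow_abs ⟨2, rfl⟩] using hq j (Nat.le_of_lt_succ hj))
  · exact hm4
end

section
/- Suppose f_X is positive and twice continuously differentiable on (a,b), and the function z ↦ (log f_X)'(z) is Lipschitz continuous on (a,b). Then the function y ↦ (log f_Y)'(y) is Lipschitz continuous on ℝ. -/
/-!
Write `σ` for the sigmoid, so that `e^y/(1+e^y)² = σ(1-σ) = σ'` and
`(a+b e^y)/(1+e^y) = a + (b-a)σ(y) = invLogit a b y`.
Then `log f_Y = log (b-a) + log (σ(1-σ)) + log f_X ∘ invLogit`, whence
`(log f_Y)' = 1 - 2σ + (b-a) · σ(1-σ) · ((log f_X)' ∘ invLogit)`.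
Both `σ` and `σ(1-σ)` are bounded and Lipschitz, and so is `(log f_X)' ∘ invLogit`: it is
Lipschitz as a composition, and bounded because a Lipschitz function is bounded on the bounded
interval `(a,b)`. A product of bounded Lipschitz functions is Lipschitz.
-/

open Real Set
open scoped NNReal

theorem LipschitzOnWith.isBounded_image {α β : Type*}
    [PseudoMetricSpace α] [PseudoMetricSpace β]
    {K : ℝ≥0} {f : α → β} {s : Set α} (hf : LipschitzOnWith K f s)
    (hs : Bornology.IsBounded s) : Bornology.IsBounded (f '' s) := by
  obtain ⟨C, hC⟩ := Metric.isBounded_iff.mp hs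
  refine Metric.isBounded_iff.mpr ⟨K * C, ?_⟩
  rintro _ ⟨x, hx, rfl⟩ _ ⟨y, hy, rfl⟩
  exact (hf.dist_le_mul x hx y hy).trans (mul_le_mul_of_nonneg_left (hC hx hy) K.coe_nonneg)

theorem LipschitzWith.mul_of_norm_le {α R : Type*} [PseudoMetricSpace α] [SeminormedRing R]
    {f g : α → R} {Kf Kg Cf Cg : ℝ≥0} (hf : LipschitzWith Kf f) (hg : LipschitzWith Kg g)
    (hfC : ∀ x, ‖f x‖ ≤ Cf) (hgC : ∀ x, ‖g x‖ ≤ Cg) :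
    LipschitzWith (Kf * Cg + Cf * Kg) fun x => f x * g x := by
  refine LipschitzWith.of_dist_le_mul fun x y => ?_
  have hsplit : f x * g x - f y * g y = (f x - f y) * g x + f y * (g x - g y) := by noncomm_ring
  rw [dist_eq_norm, hsplit]
  calc ‖(f x - f y) * g x + f y * (g x - g y)‖
      ≤ ‖f x - f y‖ * ‖g x‖ + ‖f y‖ * ‖g x - g y‖ :=
        (norm_add_le _ _).trans (add_le_add (norm_mul_le _ _) (norm_mul_le _ _))
    _ ≤ (Kf * dist x y) * Cg + Cf * (Kg * dist x y) := by
        rw [← dist_eq_norm, ← dist_eq_norm]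
        gcongr
        exacts [hf.dist_le_mul x y, hgC x, hfC y, hg.dist_le_mul x y]
    _ = ↑(Kf * Cg + Cf * Kg) * dist x y := by push_cast; ring

namespace Real

theorem sigmoid_eq_exp_div (y : ℝ) : sigmoid y = exp y / (1 + exp y) := by
  rw [sigmoid_def, exp_neg]
  field_simp
  ring

theorem sigmoid_mul_one_sub_sigmoid (y : ℝ) :
    sigmoid y * (1 - sigmoid y) = exp y / (1 + exp y) ^ 2 := by
  rw [sigmoid_eq_exp_div]
  field_simp
  ring

theorem norm_sigmoid_le_one (y : ℝ) : ‖sigmoid y‖ ≤ 1 := by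
  rw [norm_of_nonneg (sigmoid_nonneg y)]
  exact sigmoid_le_one y

theorem norm_one_sub_sigmoid_le_one (y : ℝ) : ‖1 - sigmoid y‖ ≤ 1 := by
  rw [norm_of_nonneg (sub_nonneg.mpr (sigmoid_le_one y))]
  linarith [sigmoid_nonneg y]

theorem norm_sigmoid_mul_one_sub_le_one (y : ℝ) : ‖sigmoid y * (1 - sigmoid y)‖ ≤ 1 := by
  rw [norm_mul]
  exact mul_le_one₀ (norm_sigmoid_le_one y) (norm_nonneg _) (norm_one_sub_sigmoid_le_one y)

theorem lipschitzWith_sigmoid : LipschitzWith 1 sigmoid :=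
  lipschitzWith_of_nnnorm_deriv_le differentiable_sigmoid fun y => by
    rw [deriv_sigmoid, ← NNReal.coe_le_coe, coe_nnnorm, NNReal.coe_one]
    exact norm_sigmoid_mul_one_sub_le_one y

theorem lipschitzWith_sigmoid_mul_one_sub :
    LipschitzWith 2 fun y => sigmoid y * (1 - sigmoid y) := by
  have h := lipschitzWith_sigmoid.mul_of_norm_le
    ((LipschitzWith.const 1).sub lipschitzWith_sigmoid) (Cf := 1) (Cg := 1)
    (by simpa using norm_sigmoid_le_one) (by simpa using norm_one_sub_sigmoid_le_one)
  exact h.weaken (by norm_num)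

theorem hasDerivAt_log_sigmoid_mul_one_sub (y : ℝ) :
    HasDerivAt (fun y => log (sigmoid y * (1 - sigmoid y))) (1 - 2 * sigmoid y) y := by
  have hσ := sigmoid_pos y
  have h1σ : 0 < 1 - sigmoid y := sub_pos.mpr (sigmoid_lt_one y)
  refine (((hasDerivAt_sigmoid y).mul ((hasDerivAt_sigmoid y).const_sub 1)).log
    (mul_pos hσ h1σ).ne').congr_deriv ?_
  simp only [Pi.mul_apply]
  field_simp
  ring

end Real

noncomputable def invLogit (a b y : ℝ) : ℝ := a + (b - a) * sigmoid y

noncomputable def logitDensity (a b : ℝ) (fX : ℝ → ℝ) (y : ℝ) : ℝ :=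
  (b - a) * (exp y / (1 + exp y) ^ 2) * fX ((a + b * exp y) / (1 + exp y))

theorem invLogit_mem_Ioo {a b : ℝ} (hab : a < b) (y : ℝ) : invLogit a b y ∈ Ioo a b := by
  have hσ := sigmoid_pos y
  have hσ1 := sigmoid_lt_one y
  constructor <;> unfold invLogit <;> nlinarith

theorem invLogit_eq_div (a b y : ℝ) : invLogit a b y = (a + b * exp y) / (1 + exp y) := by
  rw [invLogit, sigmoid_eq_exp_div]
  field_simp
  ring

theorem hasDerivAt_invLogit (a b y : ℝ) :
    HasDerivAt (invLogit a b) ((b - a) * (sigmoid y * (1 - sigmoid y))) y :=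
  ((hasDerivAt_sigmoid y).const_mul (b - a)).const_add a

theorem lipschitzWith_invLogit (a b : ℝ) : LipschitzWith ‖b - a‖₊ (invLogit a b) := by
  show LipschitzWith _ fun y => a + (b - a) * sigmoid y
  simpa using (LipschitzWith.const a).add ((lipschitzWith_smul (b - a)).comp lipschitzWith_sigmoid)

theorem logitDensity_eq (a b : ℝ) (fX : ℝ → ℝ) (y : ℝ) :
    logitDensity a b fX y = (b - a) * (sigmoid y * (1 - sigmoid y)) * fX (invLogit a b y) := by
  rw [logitDensity, sigmoid_mul_one_sub_sigmoid, invLogit_eq_div]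

theorem hasDerivAt_log_logitDensity {a b : ℝ} (hab : a < b) {fX : ℝ → ℝ}
    (hpos : ∀ x ∈ Ioo a b, 0 < fX x) (hdiff : DifferentiableOn ℝ fX (Ioo a b)) (y : ℝ) :
    HasDerivAt (fun y => log (logitDensity a b fX y))
      (1 - 2 * sigmoid y + (b - a) * (sigmoid y * (1 - sigmoid y) *
        deriv (fun z => log (fX z)) (invLogit a b y))) y := by
  have hlog : (fun y => log (logitDensity a b fX y)) = fun y =>
      log (b - a) + log (sigmoid y * (1 - sigmoid y)) + log (fX (invLogit a b y)) := by
    funext y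
    have hσ : 0 < sigmoid y * (1 - sigmoid y) :=
      mul_pos (sigmoid_pos y) (sub_pos.mpr (sigmoid_lt_one y))
    rw [logitDensity_eq, log_mul (by positivity) (hpos _ (invLogit_mem_Ioo hab y)).ne',
      log_mul (sub_pos.mpr hab).ne' hσ.ne']
  have hx := invLogit_mem_Ioo hab y
  have hlogfX : HasDerivAt (fun z => log (fX z)) (deriv (fun z => log (fX z)) (invLogit a b y))
      (invLogit a b y) :=
    ((hdiff.differentiableAt (isOpen_Ioo.mem_nhds hx)).log (hpos _ hx).ne').hasDerivAt
  have hsum : HasDerivAt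
      (fun y => log (b - a) + log (sigmoid y * (1 - sigmoid y)) + log (fX (invLogit a b y)))
      (0 + (1 - 2 * sigmoid y) + deriv (fun z => log (fX z)) (invLogit a b y) *
        ((b - a) * (sigmoid y * (1 - sigmoid y)))) y :=
    ((hasDerivAt_const y (log (b - a))).add (hasDerivAt_log_sigmoid_mul_one_sub y)).add
      (hlogfX.comp y (hasDerivAt_invLogit a b y))
  rw [hlog]
  exact hsum.congr_deriv (by ring)

theorem LipschitzOnWith.exists_lipschitzWith_sigmoid_mul_comp_invLogit {a b : ℝ} (hab : a < b)
    {L : ℝ → ℝ} {K : ℝ≥0} (hL : LipschitzOnWith K L (Ioo a b)) :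
    ∃ K' : ℝ≥0,
      LipschitzWith K' fun y => sigmoid y * (1 - sigmoid y) * L (invLogit a b y) := by
  have hmaps : MapsTo (invLogit a b) univ (Ioo a b) := fun y _ => invLogit_mem_Ioo hab y
  have hcomp : LipschitzWith (K * ‖b - a‖₊) (L ∘ invLogit a b) :=
    lipschitzOnWith_univ.mp (hL.comp (lipschitzWith_invLogit a b).lipschitzOnWith hmaps)
  obtain ⟨C, hC⟩ := isBounded_iff_forall_norm_le.mp
    (hL.isBounded_image (Metric.isBounded_Ioo a b))
  exact ⟨_, lipschitzWith_sigmoid_mul_one_sub.mul_of_norm_le hcomp (Cf := 1) (Cg := C.toNNReal)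
    (by simpa using norm_sigmoid_mul_one_sub_le_one)
    fun y => (hC _ (mem_image_of_mem L (invLogit_mem_Ioo hab y))).trans (le_coe_toNNReal C)⟩

/-- If `f_X` is positive and twice continuously differentiable on `(a,b)`, and
`z ↦ (log f_X)'(z)` is Lipschitz continuous on `(a,b)`, then `y ↦ (log f_Y)'(y)` is Lipschitz
continuous on `ℝ`, where `f_Y(y) = (b-a)·(e^y/(1+e^y)²)·f_X((a+b·e^y)/(1+e^y))`. -/
theorem transformed_density_log_deriv_lipschitz (a b : ℝ) (hab : a < b)
    (fX fY : ℝ → ℝ)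
    (hfY : ∀ y : ℝ, fY y =
      (b - a) * (Real.exp y / (1 + Real.exp y) ^ 2) *
        fX ((a + b * Real.exp y) / (1 + Real.exp y)))
    (hpos : ∀ x ∈ Set.Ioo a b, 0 < fX x)
    (hsmooth : ContDiffOn ℝ 2 fX (Set.Ioo a b))
    (hlip : ∃ K : NNReal, LipschitzOnWith K (deriv fun z => Real.log (fX z)) (Set.Ioo a b)) :
    ∃ K : NNReal, LipschitzWith K (deriv fun y => Real.log (fY y)) := by
  obtain rfl : fY = logitDensity a b fX := funext hfY
  obtain ⟨K₀, hK₀⟩ := hlip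
  obtain ⟨K, hK⟩ := hK₀.exists_lipschitzWith_sigmoid_mul_comp_invLogit hab
  have hderiv := fun y =>
    (hasDerivAt_log_logitDensity hab hpos (hsmooth.differentiableOn (by norm_num)) y).deriv
  rw [funext hderiv]
  have hlin : LipschitzWith (0 + ‖(2:ℝ)‖₊ * 1) fun y => 1 - 2 * sigmoid y :=
    (LipschitzWith.const 1).sub ((lipschitzWith_smul 2).comp lipschitzWith_sigmoid)
  have hprod : LipschitzWith (‖b - a‖₊ * K) fun y => (b - a) * (sigmoid y * (1 - sigmoid y) *
        deriv (fun z => log (fX z)) (invLogit a b y)) :=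
    (lipschitzWith_smul (b - a)).comp hK
  exact ⟨_, hlin.add hprod⟩
end
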